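/- Let F_q be a finite field and G ≤ PGL_2(F_q) a subgroup, and let n > 2 be an integer such that |G| does not divide n. Then there is no monic irreducible G-invariant polynomial of degree n over F_q; that is, every G-orbit of monic irreducible degree-n polynomials has size at least 2 (equivalently, ω_G(n,1) = 0). -/

import Mathlib

open Polynomial

/-- `PGL₂(F)`: the quotient of `GL₂(F)` by its center. -/
abbrev PGL2 (F : Type*) [Field F] :=
  GL (Fin 2) F ⧸ Subgroup.center (GL (Fin 2) F)

/-- The class of `A ∈ GL₂(F)` in `PGL₂(F)`. -/
abbrev PGL2.mk {F : Type*} [Field F] (A : GL (Fin 2) F) : PGL2 F :=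
  QuotientGroup.mk A

/-- The Möbius function `(ax + b)/(cx + d)` associated to `A ∈ GL₂(F)`, as a
rational function over `F`. -/
noncomputable def mobiusRatFunc {F : Type*} [Field F] (A : GL (Fin 2) F) : RatFunc F :=
  (RatFunc.C (A.val 0 0) * RatFunc.X + RatFunc.C (A.val 0 1)) /
    (RatFunc.C (A.val 1 0) * RatFunc.X + RatFunc.C (A.val 1 1))

/-- The rational transform `f^Q = Σ_{i=0}^{deg f} f_i g^i h^{deg f - i}` of a monic
polynomial `f` with the rational function `Q = g/h`. -/
noncomputable def ratTransform {F : Type*} [Field F] (g h f : F[X]) : F[X] :=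
  ∑ i ∈ Finset.range (f.natDegree + 1), C (f.coeff i) * g ^ i * h ^ (f.natDegree - i)

/-- `Q = g/h` is a quotient map for the subgroup `G ≤ PGL₂(F)`: `g, h` are coprime,
`g` is monic of degree `|G|`, `0 ≤ deg h < deg g`, and `Q` is `G`-invariant, i.e.
`Q ∘ ([A] ∘ x) = Q` for all `[A] ∈ G` (equivalently, `F(Q) = F(x)^G`). -/
def IsQuotientMap {F : Type*} [Field F] (G : Subgroup (PGL2 F)) (g h : F[X]) : Prop :=
  g.Monic ∧ IsCoprime g h ∧ h ≠ 0 ∧ h.natDegree < g.natDegree ∧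
    g.natDegree = Nat.card G ∧
    ∀ A : GL (Fin 2) F, PGL2.mk A ∈ G →
      Polynomial.aeval (mobiusRatFunc A) g / Polynomial.aeval (mobiusRatFunc A) h
        = algebraMap F[X] (RatFunc F) g / algebraMap F[X] (RatFunc F) h

/-- `d(Q)` for `Q = g/h`: the largest degree of a monic irreducible polynomial `f`
such that `f^Q` is not squarefree (`0` if no such polynomial exists). -/
noncomputable def dval {F : Type*} [Field F] (g h : F[X]) : ℕ :=
  sSup {n : ℕ | ∃ f : F[X], f.Monic ∧ Irreducible f ∧ f.natDegree = n ∧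
    ¬ Squarefree (ratTransform g h f)}

/-- The (non-normalized) Möbius substitution
`Σ_{i=0}^{deg f} f_i (ax+b)^i (cx+d)^{deg f - i}` of `f` by `A ∈ GL₂(F)`. -/
noncomputable def mobiusSubst {F : Type*} [Field F] (A : GL (Fin 2) F) (f : F[X]) : F[X] :=
  ∑ i ∈ Finset.range (f.natDegree + 1),
    C (f.coeff i) * (C (A.val 0 0) * X + C (A.val 0 1)) ^ i *
      (C (A.val 1 0) * X + C (A.val 1 1)) ^ (f.natDegree - i)

/-- `[A] ∗ f`: the unique monic scalar multiple of the Möbius substitution of `f`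
by `A`. -/
noncomputable def mobiusStar {F : Type*} [Field F] (A : GL (Fin 2) F) (f : F[X]) : F[X] :=
  C ((mobiusSubst A f).leadingCoeff)⁻¹ * mobiusSubst A f

/-- `f ∈ NR_q^G`: `f` is monic and has no root in the `G`-orbit of `∞` under the
Möbius action (the orbit point `[A] ∘ ∞` is `a/c` when `c ≠ 0`, and `∞` — which is
never a root of a monic polynomial — when `c = 0`). -/
def memNR {F : Type*} [Field F] (G : Subgroup (PGL2 F)) (f : F[X]) : Prop :=
  f.Monic ∧ ∀ A : GL (Fin 2) F, PGL2.mk A ∈ G → A.val 1 0 ≠ 0 →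
    f.eval (A.val 0 0 / A.val 1 0) ≠ 0

/-- `G ∗ r`: the `G`-orbit of the polynomial `r` under the `∗` action. -/
def polyOrbit {F : Type*} [Field F] (G : Subgroup (PGL2 F)) (r : F[X]) : Set F[X] :=
  {t : F[X] | ∃ A : GL (Fin 2) F, PGL2.mk A ∈ G ∧ t = mobiusStar A r}

/-- `ω_G(n, k)`: the number of `G`-orbits of size `k` of monic irreducible
polynomials of degree `n` in `NR_q^G`. -/
noncomputable def omegaG {F : Type*} [Field F] (G : Subgroup (PGL2 F)) (n k : ℕ) : ℕ :=
  {O : Set F[X] | ∃ r : F[X], memNR G r ∧ Irreducible r ∧ r.natDegree = n ∧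
    O = polyOrbit G r ∧ O.ncard = k}.ncard

/-!
Let `f` be irreducible of degree `n > 2` and `K` its splitting field. A root `x ∈ K` of `f`
satisfies no nonzero equation of degree `≤ 2` over `F`. Hence no Möbius transformation over `F`
sends `x` to `∞`, and only scalar matrices fix `x`, since a fixed point is a root of the quadratic
`c X² + (d - a) X - b`. If `f` is `G`-invariant, `G` therefore permutes the `n` distinct roots
of `f` in `K ⊂ ℙ¹(K)` freely, so `|G|` divides `n`.
-/

open Matrix

section Mobius

variable {F K : Type*} [Field F] [Field K] [Algebra F K]

theorem Polynomial.eq_zero_of_aeval_eq_zero_of_natDegree_lt {f p : F[X]} {x : K}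
    (hf : Irreducible f) (hfx : aeval x f = 0) (hpx : aeval x p = 0)
    (hdeg : p.natDegree < f.natDegree) : p = 0 := by
  by_contra hp
  have hdvd : f ∣ p := by
    rw [minpoly.Irreducible.eq_minpoly hf hfx]
    exact (C_mul_dvd (leadingCoeff_ne_zero.mpr hf.ne_zero)).mpr (minpoly.dvd F x hpx)
  exact absurd (natDegree_le_of_dvd hdvd hp) (not_le.mpr hdeg)

theorem aeval_ratTransform (g h f : F[X]) {x : K} (hx : aeval x h ≠ 0) :
    aeval x (ratTransform g h f) = aeval x h ^ f.natDegree * aeval (aeval x g / aeval x h) f := by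
  rw [ratTransform, map_sum, aeval_eq_sum_range (p := f), Finset.mul_sum]
  refine Finset.sum_congr rfl fun i hi => ?_
  obtain ⟨m, hm⟩ := Nat.exists_eq_add_of_le (Nat.lt_succ_iff.mp (Finset.mem_range.mp hi))
  rw [hm, Nat.add_sub_cancel_left, map_mul, map_mul, map_pow, map_pow, aeval_C, Algebra.smul_def,
    div_pow, pow_add]
  field_simp

noncomputable def mobiusNum (A : GL (Fin 2) F) : F[X] := C (A 0 0) * X + C (A 0 1)

noncomputable def mobiusDen (A : GL (Fin 2) F) : F[X] := C (A 1 0) * X + C (A 1 1)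

theorem mobiusSubst_eq_ratTransform (A : GL (Fin 2) F) (f : F[X]) :
    mobiusSubst A f = ratTransform (mobiusNum A) (mobiusDen A) f := rfl

theorem mobiusDen_ne_zero (A : GL (Fin 2) F) : mobiusDen A ≠ 0 := by
  intro h
  have hc : A 1 0 = 0 := by simpa [mobiusDen] using congr_arg (coeff · 1) h
  have hd : A 1 1 = 0 := by simpa [mobiusDen] using congr_arg (coeff · 0) h
  exact A.det_ne_zero (by rw [det_fin_two, hc, hd]; ring)

theorem aeval_mobiusDen_ne_zero {f : F[X]} {x : K} (hf : Irreducible f) (hfx : aeval x f = 0)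
    (hdeg : 1 < f.natDegree) (A : GL (Fin 2) F) : aeval x (mobiusDen A) ≠ 0 := fun h =>
  mobiusDen_ne_zero A <| eq_zero_of_aeval_eq_zero_of_natDegree_lt hf hfx h <|
    lt_of_le_of_lt (by unfold mobiusDen; compute_degree) hdeg

theorem mobiusStar_one {f : F[X]} (hf : f.Monic) : mobiusStar 1 f = f := by
  have h : mobiusSubst 1 f = f := by
    simp only [mobiusSubst, Units.val_one, one_apply_eq, one_apply_ne one_ne_zero,
      one_apply_ne zero_ne_one, map_one, map_zero, one_mul, add_zero, zero_mul, zero_add,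
      one_pow, mul_one]
    exact (as_sum_range_C_mul_X_pow f).symm
  rw [mobiusStar, h, hf.leadingCoeff, inv_one, map_one, one_mul]

theorem aeval_eq_zero_of_mobiusStar_eq {A : GL (Fin 2) F} {f : F[X]} (hA : mobiusStar A f = f)
    (hf : f ≠ 0) {x : K} (hx : aeval x (mobiusDen A) ≠ 0) (hfx : aeval x f = 0) :
    aeval (aeval x (mobiusNum A) / aeval x (mobiusDen A)) f = 0 := by
  have hsubst : aeval x (mobiusSubst A f) = 0 := by
    have hlc : (mobiusSubst A f).leadingCoeff⁻¹ ≠ 0 := by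
      intro h
      rw [mobiusStar, h, map_zero, zero_mul] at hA
      exact hf hA.symm
    have := congr_arg (aeval x) hA
    rwa [mobiusStar, map_mul, aeval_C, hfx, mul_eq_zero,
      or_iff_right ((_root_.map_ne_zero _).mpr hlc)] at this
  rw [mobiusSubst_eq_ratTransform, aeval_ratTransform _ _ _ hx] at hsubst
  exact (mul_eq_zero.mp hsubst).resolve_left (pow_ne_zero _ hx)

end Mobius

section Action

variable {F K : Type*} [Field F] [Field K] [Algebra F K] [DecidableEq K]

theorem OnePoint.scalar_smul (u : Kˣ) (p : OnePoint K) :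
    GeneralLinearGroup.scalar (Fin 2) u • p = p := by
  cases p with
  | infty => simp [OnePoint.smul_infty_eq_ite]
  | coe x => simp [OnePoint.smul_some_eq_ite]

/-- `PGL₂(F)` acts on `ℙ¹(K) = OnePoint K` through `GL₂(F) → GL₂(K)`. -/
instance OnePoint.pglMulAction : MulAction (PGL2 F) (OnePoint K) :=
  letI := MulAction.compHom (OnePoint K) (GeneralLinearGroup.map (n := Fin 2) (algebraMap F K))
  ProjGenLinGroup.mulActionOfGL fun u p => by
    rw [MulAction.compHom_smul_def, GeneralLinearGroup.map_scalar, OnePoint.scalar_smul]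

theorem OnePoint.mk_smul_coe {A : GL (Fin 2) F} {x : K} (hx : aeval x (mobiusDen A) ≠ 0) :
    PGL2.mk A • (x : OnePoint K) = ↑(aeval x (mobiusNum A) / aeval x (mobiusDen A)) := by
  change GeneralLinearGroup.map (algebraMap F K) A • (x : OnePoint K) = _
  simp only [mobiusNum, mobiusDen, map_add, map_mul, aeval_C, aeval_X] at hx ⊢
  simp only [OnePoint.smul_some_eq_ite, GeneralLinearGroup.map_apply, if_neg hx]

theorem Matrix.GeneralLinearGroup.fixpointPolynomial_map {R S : Type*} [CommRing R] [CommRing S]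
    (φ : R →+* S) (A : GL (Fin 2) R) :
    (map φ A).fixpointPolynomial = A.fixpointPolynomial.map φ := by
  simp [fixpointPolynomial]

theorem OnePoint.mk_eq_one_of_smul_coe_eq {A : GL (Fin 2) F} {f : F[X]} {x : K}
    (hf : Irreducible f) (hfx : aeval x f = 0) (hdeg : 2 < f.natDegree)
    (h : PGL2.mk A • (x : OnePoint K) = x) : PGL2.mk A = 1 := by
  have hfix : aeval x A.fixpointPolynomial = 0 := by
    rw [← aeval_map_algebraMap K, ← GeneralLinearGroup.fixpointPolynomial_map]
    exact GeneralLinearGroup.fixpointPolynomial_aeval_eq_zero_iff.mpr h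
  have hzero : A.fixpointPolynomial = 0 := eq_zero_of_aeval_eq_zero_of_natDegree_lt hf hfx hfix <|
    lt_of_le_of_lt (by unfold GeneralLinearGroup.fixpointPolynomial; compute_degree) hdeg
  rw [QuotientGroup.eq_one_iff, GeneralLinearGroup.mem_center_iff_val_mem_range_scalar,
    ← GeneralLinearGroup.fixpointPolynomial_eq_zero_iff]
  exact hzero

end Action

theorem MulAction.card_dvd_ncard_of_free {G X : Type*} [Group G] [MulAction G X] {S : Set X}
    (hS : ∀ g : G, ∀ x ∈ S, g • x ∈ S) (hfree : ∀ g : G, ∀ x ∈ S, g • x = x → g = 1) :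
    Nat.card G ∣ S.ncard := by
  let T : SubMulAction G X := ⟨S, fun g _ hx => hS g _ hx⟩
  have hstab : ∀ x : T, stabilizer G x = ⊥ := fun x =>
    (Subgroup.eq_bot_iff_forall _).mpr fun g hg => hfree g x x.2 (congr_arg Subtype.val hg)
  change Nat.card G ∣ Nat.card T
  rw [Nat.card_congr (selfEquivOrbitsQuotientProd hstab), Nat.card_prod]
  exact dvd_mul_left _ _

theorem card_dvd_natDegree_of_forall_mobiusStar_eq {F : Type*} [Field F] (G : Subgroup (PGL2 F))
    {f : F[X]} (hf : Irreducible f) (hsep : f.Separable) (hdeg : 2 < f.natDegree)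
    (hinv : ∀ A : GL (Fin 2) F, PGL2.mk A ∈ G → mobiusStar A f = f) :
    Nat.card G ∣ f.natDegree := by
  classical
  let K := SplittingField f
  have hroot {x : K} (hx : x ∈ f.rootSet K) : aeval x f = 0 := (mem_rootSet.mp hx).2
  have hden (A : GL (Fin 2) F) {x : K} (hx : x ∈ f.rootSet K) : aeval x (mobiusDen A) ≠ 0 :=
    aeval_mobiusDen_ne_zero hf (hroot hx) (by omega) A
  have hcard : ((↑) '' f.rootSet K : Set (OnePoint K)).ncard = f.natDegree := by
    rw [Set.ncard_image_of_injective _ OnePoint.coe_injective, Set.ncard_eq_toFinset_card',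
      Set.toFinset_card, card_rootSet_eq_natDegree hsep (SplittingField.splits f)]
  rw [← hcard]
  apply MulAction.card_dvd_ncard_of_free
  · rintro ⟨g, hg⟩ _ ⟨x, hx, rfl⟩
    obtain ⟨A, rfl⟩ := QuotientGroup.mk_surjective g
    refine ⟨_, ?_, (OnePoint.mk_smul_coe (hden A hx)).symm⟩
    exact mem_rootSet.mpr ⟨hf.ne_zero,
      aeval_eq_zero_of_mobiusStar_eq (hinv A hg) hf.ne_zero (hden A hx) (hroot hx)⟩
  · rintro ⟨g, hg⟩ _ ⟨x, hx, rfl⟩ hgx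
    obtain ⟨A, rfl⟩ := QuotientGroup.mk_surjective g
    exact Subtype.ext (OnePoint.mk_eq_one_of_smul_coe_eq hf (hroot hx) hdeg hgx)

theorem polyOrbit_ncard_ne_one {F : Type*} [Field F] {G : Subgroup (PGL2 F)} {f : F[X]}
    (hf : f.Monic) {A : GL (Fin 2) F} (hA : PGL2.mk A ∈ G) (hAf : mobiusStar A f ≠ f) :
    (polyOrbit G f).ncard ≠ 1 := by
  intro h
  obtain ⟨a, ha⟩ := Set.ncard_eq_one.mp h
  have hf_mem : f ∈ polyOrbit G f := ⟨1, G.one_mem, (mobiusStar_one hf).symm⟩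
  have hAf_mem : mobiusStar A f ∈ polyOrbit G f := ⟨A, hA, rfl⟩
  rw [ha, Set.mem_singleton_iff] at hf_mem hAf_mem
  exact hAf (hAf_mem.trans hf_mem.symm)

theorem no_invariant_irreducible_of_not_dvd (F : Type*) [Field F] [Fintype F]
    (G : Subgroup (PGL2 F)) (n : ℕ) (hn : 2 < n) (hdvd : ¬ Nat.card G ∣ n) :
    (∀ f : F[X], f.Monic → Irreducible f → f.natDegree = n →
        ∃ A : GL (Fin 2) F, PGL2.mk A ∈ G ∧ mobiusStar A f ≠ f)
      ∧ omegaG G n 1 = 0 := by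
  have hmoved (f : F[X]) (hf : Irreducible f) (hfn : f.natDegree = n) :
      ∃ A : GL (Fin 2) F, PGL2.mk A ∈ G ∧ mobiusStar A f ≠ f := by
    by_contra! hfix
    subst hfn
    exact hdvd <| card_dvd_natDegree_of_forall_mobiusStar_eq G hf
      (PerfectField.separable_of_irreducible hf) hn hfix
  refine ⟨fun f _ => hmoved f, ?_⟩
  rw [omegaG]
  convert Set.ncard_empty (Set F[X])
  refine Set.eq_empty_iff_forall_notMem.mpr ?_
  rintro _ ⟨r, hr, hirr, hrn, rfl, hcard⟩
  obtain ⟨A, hA, hAr⟩ := hmoved r hirr hrn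
  exact polyOrbit_ncard_ne_one hr.1 hA hAr hcard
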